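/- arXiv:2109.09448 — 3 statements merged into one kernel-verified Lean document; each statement's English description precedes it below -/
import Mathlib

section
/- Let (φ_n) ⊂ C([0,T], ℝ^p) converge uniformly to φ, and let a : ℝ^p → ℝ^{d×d} be continuous with a(y) symmetric positive definite for all y. Then for every ε > 0 there exists n_ε ∈ ℕ such that for all n ≥ n_ε and all t ∈ [0,T], the matrix a(φ_n(t))^{-1} − (1−ε) a(φ(t))^{-1} is positive definite. -/
/-! The quadratic form `Q (y, u) = u ⬝ᵥ (a y)⁻¹ *ᵥ u` is continuous and positive, so it is bounded
below by some `c > 0` on the compact set `φ₀ '' Icc 0 T ×ˢ sphere 0 1`; by compactness again,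
`Q (φ n t, u) → Q (φ₀ t, u)` uniformly in `(t, u)`. Once the error is below `ε * c`, we get
`Q (φ n t, u) > (1 - ε) * Q (φ₀ t, u)` on the unit sphere, and homogeneity extends this to all
`v ≠ 0`. -/

open Set Filter Metric Matrix

theorem IsCompact.comp_tendstoUniformlyOn {ι α β γ : Type*} [UniformSpace β] [UniformSpace γ]
    {F : ι → α → β} {f : α → β} {p : Filter ι} {s : Set α} {K : Set β} {g : β → γ}
    (hK : IsCompact K) (hg : ∀ y ∈ K, ContinuousAt g y) (hfK : MapsTo f s K)
    (h : TendstoUniformlyOn F f p s) :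
    TendstoUniformlyOn (fun i x => g (F i x)) (fun x => g (f x)) p s := fun r hr => by
  filter_upwards [h _ (hK.uniformContinuousAt_of_continuousAt g hg hr)] with i hi x hx
  exact hi x hx (hfK hx)

theorem TendstoUniformlyOn.prodMap_id {ι α β γ : Type*} [PseudoMetricSpace β]
    [PseudoMetricSpace γ] {F : ι → α → β} {f : α → β} {p : Filter ι} {s : Set α}
    (h : TendstoUniformlyOn F f p s) (S : Set γ) :
    TendstoUniformlyOn (fun i z => (F i z.1, z.2)) (fun z => (f z.1, z.2)) p (s ×ˢ S) := by
  rw [Metric.tendstoUniformlyOn_iff] at h ⊢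
  intro ε hε
  filter_upwards [h ε hε] with i hi z hz
  simpa [Prod.dist_eq, hε.le] using hi z.1 hz.1

theorem Continuous.matrix_inv_of_isUnit_det {X n R : Type*} [TopologicalSpace X] [Fintype n]
    [DecidableEq n] [NormedCommRing R] [CompleteSpace R] {A : X → Matrix n n R}
    (hA : Continuous A) (h : ∀ x, IsUnit (A x).det) : Continuous fun x => (A x)⁻¹ :=
  continuous_iff_continuousAt.2 fun x =>
    (continuousAt_matrix_inv _ (by simpa using NormedRing.inverse_continuousAt (h x).unit)).comp
      hA.continuousAt

theorem IsCompact.exists_pos_le_dotProduct_mulVec {X n : Type*} [TopologicalSpace X]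
    [Fintype n] {B : X → Matrix n n ℝ} {K : Set X} (hK : IsCompact K) (hB : Continuous B)
    (hpd : ∀ y ∈ K, (B y).PosDef) :
    ∃ c > 0, ∀ y ∈ K, ∀ u ∈ sphere (0 : n → ℝ) 1, c ≤ u ⬝ᵥ B y *ᵥ u := by
  rcases (K ×ˢ sphere (0 : n → ℝ) 1).eq_empty_or_nonempty with hempty | hne
  · refine ⟨1, one_pos, fun y hy u hu => ?_⟩
    exact absurd (hempty ▸ mk_mem_prod hy hu) (notMem_empty _)
  have hQ : Continuous fun z : X × (n → ℝ) => z.2 ⬝ᵥ B z.1 *ᵥ z.2 := by fun_prop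
  obtain ⟨⟨y₀, u₀⟩, ⟨hy₀, hu₀⟩, hmin⟩ :=
    (hK.prod (isCompact_sphere 0 1)).exists_isMinOn hne hQ.continuousOn
  refine ⟨_, (hpd y₀ hy₀).dotProduct_mulVec_pos ?_, fun y hy u hu => hmin (mk_mem_prod hy hu)⟩
  rintro rfl
  simp at hu₀

theorem Matrix.dotProduct_mulVec_pos_of_sphere {n : Type*} [Fintype n] {M : Matrix n n ℝ}
    (h : ∀ u ∈ sphere (0 : n → ℝ) 1, 0 < u ⬝ᵥ M *ᵥ u) {v : n → ℝ} (hv : v ≠ 0) :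
    0 < v ⬝ᵥ M *ᵥ v := by
  have hnorm : ‖v‖ ≠ 0 := norm_ne_zero_iff.2 hv
  have hu : ‖v‖⁻¹ • v ∈ sphere (0 : n → ℝ) 1 := by
    simp [norm_smul, hnorm]
  have hpos := h _ hu
  simp only [mulVec_smul, dotProduct_smul, smul_dotProduct, smul_eq_mul] at hpos
  have hinv : 0 ≤ ‖v‖⁻¹ := by positivity
  exact pos_of_mul_pos_right (pos_of_mul_pos_right hpos hinv) hinv

theorem stmt6_general (p d : ℕ) (T : ℝ)
    (φ : ℕ → ℝ → (Fin p → ℝ)) (φ₀ : ℝ → (Fin p → ℝ))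
    (hφ₀ : ContinuousOn φ₀ (Icc 0 T))
    (hconv : TendstoUniformlyOn φ φ₀ atTop (Icc 0 T))
    (a : (Fin p → ℝ) → Matrix (Fin d) (Fin d) ℝ)
    (ha : Continuous a) (hpd : ∀ y, (a y).PosDef) :
    ∀ ε : ℝ, 0 < ε → ∃ N : ℕ, ∀ n ≥ N, ∀ t ∈ Icc (0:ℝ) T, ∀ v : Fin d → ℝ, v ≠ 0 →
      0 < dotProduct v
        ((((a (φ n t))⁻¹ - (1 - ε) • (a (φ₀ t))⁻¹)).mulVec v) := by
  intro ε hε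
  have hB : Continuous fun y => (a y)⁻¹ :=
    ha.matrix_inv_of_isUnit_det fun y => (hpd y).isUnit.map detMonoidHom
  have hK : IsCompact (φ₀ '' Icc 0 T) := isCompact_Icc.image_of_continuousOn hφ₀
  obtain ⟨c, hc, hcoer⟩ :=
    hK.exists_pos_le_dotProduct_mulVec hB fun y _ => (hpd y).inv
  have hQ : Continuous fun z : (Fin p → ℝ) × (Fin d → ℝ) => z.2 ⬝ᵥ (a z.1)⁻¹ *ᵥ z.2 :=
    continuous_snd.dotProduct ((hB.comp continuous_fst).matrix_mulVec continuous_snd)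
  have hunif := (hK.prod (isCompact_sphere 0 1)).comp_tendstoUniformlyOn
    (fun z _ => hQ.continuousAt) (mapsTo_image φ₀ _ |>.prodMap (mapsTo_id _))
    (hconv.prodMap_id (sphere (0 : Fin d → ℝ) 1))
  obtain ⟨N, hN⟩ := eventually_atTop.1 (tendstoUniformlyOn_iff.1 hunif (ε * c) (by positivity))
  refine ⟨N, fun n hn t ht v => dotProduct_mulVec_pos_of_sphere fun u hu => ?_⟩
  have hclose := hN n hn (t, u) ⟨ht, hu⟩
  have hlower := hcoer _ (mem_image_of_mem φ₀ ht) u hu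
  simp only [id, Real.dist_eq, abs_lt] at hclose
  have hεc := mul_le_mul_of_nonneg_left hlower hε.le
  simp only [sub_mulVec, smul_mulVec, dotProduct_sub, dotProduct_smul, smul_eq_mul]
  linarith

theorem stmt6 (p d : ℕ) (T : ℝ) (hT : 0 < T)
    (φ : ℕ → ℝ → (Fin p → ℝ)) (φ₀ : ℝ → (Fin p → ℝ))
    (hφ : ∀ n, ContinuousOn (φ n) (Icc 0 T)) (hφ₀ : ContinuousOn φ₀ (Icc 0 T))
    (hconv : TendstoUniformlyOn φ φ₀ atTop (Icc 0 T))
    (a : (Fin p → ℝ) → Matrix (Fin d) (Fin d) ℝ)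
    (ha : Continuous a) (hpd : ∀ y, (a y).PosDef) :
    ∀ ε : ℝ, 0 < ε → ∃ N : ℕ, ∀ n ≥ N, ∀ t ∈ Icc (0:ℝ) T, ∀ v : Fin d → ℝ, v ≠ 0 →
      0 < dotProduct v
        ((((a (φ n t))⁻¹ - (1 - ε) • (a (φ₀ t))⁻¹)).mulVec v) :=
  stmt6_general p d T φ φ₀ hφ₀ hconv a ha hpd
end

section
/- Let μ : ℝ^p → ℝ^d be continuous and a : ℝ^p → ℝ^{d×d} continuous with a(y) symmetric positive definite for all y. Define J(x|φ) = (1/2)∫₀ᵀ (ẋ(t) − μ(φ(t)))ᵀ a(φ(t))^{-1} (ẋ(t) − μ(φ(t))) dt for x ∈ H₀^{1,d}[0,T] and J(x|φ) = +∞ otherwise. Then J(·|·) is jointly lower semicontinuous on C₀([0,T],ℝ^p) × C₀([0,T],ℝ^d) with the uniform topologies: if φ_n → φ uniformly and x_n → x uniformly, then liminf_{n→∞} J(x_n|φ_n) ≥ J(x|φ). -/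
/-!
The ratio of the quadratic forms of `a(y)⁻¹` and `a(y')⁻¹` on the unit sphere is continuous and
equals `1` for `y = y'`, so on a compact set `K ⊇ range φ` it is at most `1 + θ` once `y, y'`
are close; by homogeneity `wᵀa(y)⁻¹w ≤ (1 + θ) wᵀa(y')⁻¹w` for all `w`. The shift
`s = μ(y') − μ(y)` is absorbed by `(w + s)ᵀQ(w + s) ≤ (1 + θ) wᵀQw + (1 + θ⁻¹) sᵀQs`. So once `φₙ`
is uniformly close to `φ`, the integrand of `J(·|φ)` is at most `(1 + θ)²` times that of
`J(·|φₙ)` plus `θ` for every velocity, whence `J(·|φ) ≤ (1 + θ)² J(·|φₙ) + θT/2`. Lower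
semicontinuity of `J(·|φ)` gives `J(x|φ) ≤ (1 + θ)² liminf J(xₙ|φₙ) + θT/2`; let `θ → 0`.
-/

open MeasureTheory Filter Set
open scoped ENNReal

/-- The conditional rate functional `J(x|φ)`:
`J(x|φ) = (1/2)∫₀ᵀ (ẋ(t) − μ(φ(t)))ᵀ a(φ(t))⁻¹ (ẋ(t) − μ(φ(t))) dt` when `x` is
absolutely continuous with square-integrable derivative `u = ẋ` and `x 0 = 0`
(encoded through the integral representation `x t = ∫₀ᵗ u`), and `+∞` otherwise
(`sInf ∅ = ⊤`). -/
noncomputable def Jrate (p d : ℕ) (T : ℝ) (hT : (0:ℝ) ≤ T)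
    (μ : (Fin p → ℝ) → (Fin d → ℝ)) (a : (Fin p → ℝ) → Matrix (Fin d) (Fin d) ℝ)
    (φ : C(Set.Icc (0:ℝ) T, Fin p → ℝ)) (x : C(Set.Icc (0:ℝ) T, Fin d → ℝ)) : ℝ≥0∞ :=
  sInf {r : ℝ≥0∞ | ∃ u : ℝ → Fin d → ℝ,
    (∀ i, IntervalIntegrable (fun s => u s i) volume 0 T) ∧
    IntervalIntegrable (fun t => dotProduct
        (u t - μ (φ (Set.projIcc 0 T hT t)))
        (((a (φ (Set.projIcc 0 T hT t)))⁻¹).mulVec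
          (u t - μ (φ (Set.projIcc 0 T hT t))))) volume 0 T ∧
    (∀ t : Set.Icc (0:ℝ) T, ∀ i, x t i = ∫ s in (0:ℝ)..(t:ℝ), u s i) ∧
    r = ENNReal.ofReal ((1/2) * ∫ t in (0:ℝ)..T, dotProduct
        (u t - μ (φ (Set.projIcc 0 T hT t)))
        (((a (φ (Set.projIcc 0 T hT t)))⁻¹).mulVec
          (u t - μ (φ (Set.projIcc 0 T hT t)))))}

open Matrix
open scoped Interval Topology

theorem Matrix.PosSemidef.dotProduct_mulVec_add_le {n : Type*} [Fintype n] {Q : Matrix n n ℝ}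
    (hQ : Q.PosSemidef) {θ : ℝ} (hθ : 0 < θ) (w s : n → ℝ) :
    (w + s) ⬝ᵥ Q *ᵥ (w + s) ≤ (1 + θ) * (w ⬝ᵥ Q *ᵥ w) + (1 + θ⁻¹) * (s ⬝ᵥ Q *ᵥ s) := by
  have hsymm : s ⬝ᵥ Q *ᵥ w = w ⬝ᵥ Q *ᵥ s := by
    rw [Matrix.dotProduct_mulVec, dotProduct_comm, ← Matrix.mulVec_transpose,
      ← Matrix.conjTranspose_eq_transpose_of_trivial, hQ.isHermitian.eq]
  have hnonneg := hQ.dotProduct_mulVec_nonneg (θ • w - s)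
  simp only [star_trivial, Matrix.mulVec_sub, Matrix.mulVec_smul, sub_dotProduct, dotProduct_sub,
    smul_dotProduct, dotProduct_smul, smul_eq_mul, hsymm] at hnonneg
  have hexpand : (w + s) ⬝ᵥ Q *ᵥ (w + s) = w ⬝ᵥ Q *ᵥ w + 2 * (w ⬝ᵥ Q *ᵥ s) + s ⬝ᵥ Q *ᵥ s := by
    simp only [Matrix.mulVec_add, add_dotProduct, dotProduct_add, hsymm]; ring
  have hdiv : 2 * (w ⬝ᵥ Q *ᵥ s) ≤ θ * (w ⬝ᵥ Q *ᵥ w) + θ⁻¹ * (s ⬝ᵥ Q *ᵥ s) := by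
    have := mul_nonneg (inv_nonneg.2 hθ.le) hnonneg
    field_simp at this ⊢
    linarith
  rw [hexpand]
  linarith

theorem Matrix.dotProduct_mulVec_le_of_forall_mem_sphere {n : Type*} [Fintype n]
    {M N : Matrix n n ℝ} {c : ℝ}
    (h : ∀ u ∈ Metric.sphere (0 : n → ℝ) 1, u ⬝ᵥ M *ᵥ u ≤ c * (u ⬝ᵥ N *ᵥ u)) (w : n → ℝ) :
    w ⬝ᵥ M *ᵥ w ≤ c * (w ⬝ᵥ N *ᵥ w) := by
  rcases eq_or_ne w 0 with rfl | hw
  · simp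
  have hr : 0 < ‖w‖ := norm_pos_iff.2 hw
  have hu : ‖w‖⁻¹ • w ∈ Metric.sphere (0 : n → ℝ) 1 := by
    simp [norm_smul, hr.ne']
  have hw' : w = ‖w‖ • (‖w‖⁻¹ • w) := by rw [smul_smul, mul_inv_cancel₀ hr.ne', one_smul]
  have hscale : ∀ A : Matrix n n ℝ, w ⬝ᵥ A *ᵥ w =
      ‖w‖ ^ 2 * ((‖w‖⁻¹ • w) ⬝ᵥ A *ᵥ (‖w‖⁻¹ • w)) := fun A => by
    conv_lhs => rw [hw']
    simp only [Matrix.mulVec_smul, smul_dotProduct, dotProduct_smul, smul_eq_mul]; ring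
  rw [hscale M, hscale N, mul_left_comm]
  exact mul_le_mul_of_nonneg_left (h _ hu) (by positivity)

theorem IsCompact.exists_forall_dist_lt_of_continuousOn_prod {X Y Z : Type*}
    [PseudoMetricSpace X] [PseudoMetricSpace Y] [PseudoMetricSpace Z] {K : Set X} {L : Set Y}
    (hK : IsCompact K) (hL : IsCompact L) {g : X × Y → Z} (hg : ContinuousOn g (K ×ˢ L))
    {ε : ℝ} (hε : 0 < ε) :
    ∃ δ > 0, ∀ x ∈ K, ∀ x' ∈ K, dist x x' < δ → ∀ y ∈ L, dist (g (x, y)) (g (x', y)) < ε := by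
  obtain ⟨δ, hδ, hg⟩ :=
    Metric.uniformContinuousOn_iff.1 ((hK.prod hL).uniformContinuousOn_of_continuous hg) ε hε
  refine ⟨δ, hδ, fun x hx x' hx' hxx' y hy => hg _ ⟨hx, hy⟩ _ ⟨hx', hy⟩ ?_⟩
  simpa [Prod.dist_eq] using hxx'

theorem exists_dotProduct_mulVec_le_one_add_mul {P n : Type*} [PseudoMetricSpace P] [Fintype n]
    {Q : P → Matrix n n ℝ} (hQ : Continuous Q) (hpd : ∀ y, (Q y).PosDef) {K : Set P}
    (hK : IsCompact K) {θ : ℝ} (hθ : 0 < θ) :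
    ∃ δ > 0, ∀ y ∈ K, ∀ y' ∈ K, dist y y' < δ → ∀ w,
      w ⬝ᵥ Q y *ᵥ w ≤ (1 + θ) * (w ⬝ᵥ Q y' *ᵥ w) := by
  have hF : Continuous fun q : P × (n → ℝ) => q.2 ⬝ᵥ Q q.1 *ᵥ q.2 :=
    continuous_snd.dotProduct ((hQ.comp continuous_fst).matrix_mulVec continuous_snd)
  have hpos : ∀ y, ∀ u ∈ Metric.sphere (0 : n → ℝ) 1, 0 < u ⬝ᵥ Q y *ᵥ u := fun y u hu => by
    simpa using (hpd y).dotProduct_mulVec_pos (ne_zero_of_mem_unit_sphere ⟨u, hu⟩)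
  obtain ⟨δ, hδ, hratio⟩ := hK.exists_forall_dist_lt_of_continuousOn_prod
    (hK.prod (isCompact_sphere (0 : n → ℝ) 1))
    (g := fun q => (q.2.2 ⬝ᵥ Q q.1 *ᵥ q.2.2) / (q.2.2 ⬝ᵥ Q q.2.1 *ᵥ q.2.2))
    ((hF.comp (continuous_fst.prodMk continuous_snd.snd)).continuousOn.div
      (hF.comp continuous_snd).continuousOn fun q hq => (hpos _ _ hq.2.2).ne') hθ
  refine ⟨δ, hδ, fun y hy y' hy' hyy' => dotProduct_mulVec_le_of_forall_mem_sphere fun u hu => ?_⟩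
  have h := hratio y hy y' hy' hyy' (y', u) ⟨hy', hu⟩
  rw [div_self (hpos y' u hu).ne', Real.dist_eq, abs_sub_lt_iff, sub_lt_iff_lt_add'] at h
  exact ((div_lt_iff₀ (hpos y' u hu)).1 h.1).le

theorem Continuous.matrix_inv_of_det_ne_zero {X n : Type*} [TopologicalSpace X] [Fintype n]
    [DecidableEq n] {A : X → Matrix n n ℝ} (hA : Continuous A) (hdet : ∀ x, (A x).det ≠ 0) :
    Continuous fun x => (A x)⁻¹ := by
  simp only [Matrix.inv_def, Ring.inverse_eq_inv']
  exact (hA.matrix_det.inv₀ hdet).smul hA.matrix_adjugate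

theorem ENNReal.le_of_forall_pos_le_sq_mul_add {A L : ℝ≥0∞} {C : ℝ}
    (h : ∀ θ > 0, A ≤ ENNReal.ofReal ((1 + θ) ^ 2) * L + ENNReal.ofReal (θ * C)) : A ≤ L := by
  have hlim : Tendsto (fun θ : ℝ => ENNReal.ofReal ((1 + θ) ^ 2) * L + ENNReal.ofReal (θ * C))
      (𝓝[>] 0) (𝓝 L) := by
    have hsq : Continuous fun θ : ℝ => ENNReal.ofReal ((1 + θ) ^ 2) :=
      ENNReal.continuous_ofReal.comp (by fun_prop)
    have hlin : Continuous fun θ : ℝ => ENNReal.ofReal (θ * C) :=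
      ENNReal.continuous_ofReal.comp (by fun_prop)
    have h := (ENNReal.Tendsto.mul_const (b := L) (hsq.tendsto 0) (by simp)).add (hlin.tendsto 0)
    simpa using h.mono_left nhdsWithin_le_nhds
  exact ge_of_tendsto hlim (eventually_nhdsWithin_of_forall h)

theorem ENNReal.le_mul_sInf_add {A c b : ℝ≥0∞} {S : Set ℝ≥0∞} (hc₀ : c ≠ 0) (hc : c ≠ ⊤)
    (h : ∀ r ∈ S, A ≤ c * r + b) : A ≤ c * sInf S + b := by
  have hdiv : (A - b) / c ≤ sInf S :=
    le_sInf fun r hr => (ENNReal.div_le_iff' hc₀ hc).2 (tsub_le_iff_right.2 (h r hr))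
  calc A ≤ A - b + b := le_tsub_add
    _ ≤ c * sInf S + b := add_le_add_left ((ENNReal.div_le_iff' hc₀ hc).1 hdiv) _

section RateIntegrand

variable {P ι : Type*} [Fintype ι] [DecidableEq ι]

noncomputable def rateIntegrand (μ : P → ι → ℝ) (a : P → Matrix ι ι ℝ) (y : P) (v : ι → ℝ) : ℝ :=
  (v - μ y) ⬝ᵥ (a y)⁻¹ *ᵥ (v - μ y)

theorem rateIntegrand_nonneg {μ : P → ι → ℝ} {a : P → Matrix ι ι ℝ} {y : P}
    (hy : ((a y)⁻¹).PosSemidef) (v : ι → ℝ) : 0 ≤ rateIntegrand μ a y v := by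
  unfold rateIntegrand
  simpa only [star_trivial] using hy.dotProduct_mulVec_nonneg (v - μ y)

theorem exists_rateIntegrand_le [PseudoMetricSpace P] {μ : P → ι → ℝ} {a : P → Matrix ι ι ℝ}
    (hμ : Continuous μ) (ha : Continuous a) (hpd : ∀ y, (a y).PosDef) {K : Set P}
    (hK : IsCompact K) {θ : ℝ} (hθ : 0 < θ) :
    ∃ δ > 0, ∀ y ∈ K, ∀ y' ∈ K, dist y y' < δ → ∀ v,
      rateIntegrand μ a y v ≤ (1 + θ) ^ 2 * rateIntegrand μ a y' v + θ := by
  have hQ : Continuous fun y => (a y)⁻¹ :=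
    ha.matrix_inv_of_det_ne_zero fun y => (hpd y).det_pos.ne'
  obtain ⟨δ₁, hδ₁, hform⟩ :=
    exists_dotProduct_mulVec_le_one_add_mul hQ (fun y => (hpd y).inv) hK hθ
  have hw : Continuous fun q : P × P => μ q.2 - μ q.1 :=
    (hμ.comp continuous_snd).sub (hμ.comp continuous_fst)
  obtain ⟨δ₂, hδ₂, hshift⟩ := hK.exists_forall_dist_lt_of_continuousOn_prod hK
    (g := fun q => (μ q.2 - μ q.1) ⬝ᵥ (a q.1)⁻¹ *ᵥ (μ q.2 - μ q.1))
    (hw.dotProduct ((hQ.comp continuous_fst).matrix_mulVec hw)).continuousOn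
    (show 0 < θ / (1 + θ⁻¹) by positivity)
  refine ⟨min δ₁ δ₂, lt_min hδ₁ hδ₂, fun y hy y' hy' hyy' v => ?_⟩
  have hsmall : (μ y' - μ y) ⬝ᵥ (a y)⁻¹ *ᵥ (μ y' - μ y) < θ / (1 + θ⁻¹) := by
    have h := hshift y hy y' hy' (hyy'.trans_le (min_le_right _ _)) y' hy'
    simp only [sub_self, zero_dotProduct, Real.dist_eq, sub_zero, abs_lt] at h
    exact h.2
  have hsplit : v - μ y = (v - μ y') + (μ y' - μ y) := by abel
  calc rateIntegrand μ a y v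
      ≤ (1 + θ) * ((v - μ y') ⬝ᵥ (a y)⁻¹ *ᵥ (v - μ y'))
        + (1 + θ⁻¹) * ((μ y' - μ y) ⬝ᵥ (a y)⁻¹ *ᵥ (μ y' - μ y)) := by
        rw [rateIntegrand, hsplit]
        exact (hpd y).inv.posSemidef.dotProduct_mulVec_add_le hθ _ _
    _ ≤ (1 + θ) * ((1 + θ) * rateIntegrand μ a y' v) + (1 + θ⁻¹) * (θ / (1 + θ⁻¹)) := by
        gcongr
        exact hform y hy y' hy' (hyy'.trans_le (min_le_left _ _)) _
    _ = (1 + θ) ^ 2 * rateIntegrand μ a y' v + θ := by field_simp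

theorem aestronglyMeasurable_rateIntegrand {α : Type*} [TopologicalSpace α] [MeasurableSpace α]
    [OpensMeasurableSpace α] [SecondCountableTopology α] {ν : Measure α}
    [TopologicalSpace P] {μ : P → ι → ℝ} {a : P → Matrix ι ι ℝ} (hμ : Continuous μ)
    (hQ : Continuous fun y => (a y)⁻¹) {ψ : α → P} (hψ : Continuous ψ) {u : α → ι → ℝ}
    (hu : AEMeasurable u ν) :
    AEStronglyMeasurable (fun t => rateIntegrand μ a (ψ t) (u t)) ν := by
  have hw : Continuous fun q : α × (ι → ℝ) => q.2 - μ (ψ q.1) :=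
    continuous_snd.sub (hμ.comp (hψ.comp continuous_fst))
  have hG : Continuous fun q : α × (ι → ℝ) => rateIntegrand μ a (ψ q.1) q.2 :=
    hw.dotProduct ((hQ.comp (hψ.comp continuous_fst)).matrix_mulVec hw)
  exact (hG.measurable.comp_aemeasurable (aemeasurable_id.prodMk hu)).aestronglyMeasurable

end RateIntegrand

theorem intervalIntegrable_and_integral_le_of_le_mul_add {g g' : ℝ → ℝ} {T c η : ℝ}
    (hT : 0 ≤ T) (hg' : IntervalIntegrable g' volume 0 T)
    (hg : AEStronglyMeasurable g (volume.restrict (Ι 0 T))) (hg₀ : ∀ t, 0 ≤ g t)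
    (hle : ∀ t, g t ≤ c * g' t + η) :
    IntervalIntegrable g volume 0 T ∧ ∫ t in 0..T, g t ≤ c * (∫ t in 0..T, g' t) + η * T := by
  have hbound : IntervalIntegrable (fun t => c * g' t + η) volume 0 T :=
    (hg'.const_mul c).add intervalIntegrable_const
  have hgi : IntervalIntegrable g volume 0 T :=
    hbound.mono_fun' hg (ae_of_all _ fun t => (Real.norm_of_nonneg (hg₀ t)).trans_le (hle t))
  refine ⟨hgi, ?_⟩
  have := intervalIntegral.integral_mono_on hT hgi hbound fun t _ => hle t
  rwa [intervalIntegral.integral_add (hg'.const_mul c) intervalIntegrable_const,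
    intervalIntegral.integral_const_mul, intervalIntegral.integral_const, smul_eq_mul,
    sub_zero, mul_comm T] at this

theorem Jrate_le_mul_add {p d : ℕ} {T : ℝ} (hT : 0 ≤ T) {μ : (Fin p → ℝ) → Fin d → ℝ}
    {a : (Fin p → ℝ) → Matrix (Fin d) (Fin d) ℝ} (hμ : Continuous μ)
    (hQ : Continuous fun y => (a y)⁻¹) (hpsd : ∀ y, ((a y)⁻¹).PosSemidef)
    {ψ ψ' : C(Icc (0:ℝ) T, Fin p → ℝ)} {c η : ℝ} (hc : 0 < c)
    (hle : ∀ s v, rateIntegrand μ a (ψ s) v ≤ c * rateIntegrand μ a (ψ' s) v + η)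
    (x : C(Icc (0:ℝ) T, Fin d → ℝ)) :
    Jrate p d T hT μ a ψ x ≤
      ENNReal.ofReal c * Jrate p d T hT μ a ψ' x + ENNReal.ofReal (η * (T / 2)) := by
  conv_rhs => rw [Jrate]
  refine ENNReal.le_mul_sInf_add (by simpa using hc) ENNReal.ofReal_ne_top ?_
  rintro r ⟨u, hu, hg', hux, rfl⟩
  obtain ⟨hg, hint⟩ := intervalIntegrable_and_integral_le_of_le_mul_add
    (g := fun t => rateIntegrand μ a (ψ (projIcc 0 T hT t)) (u t))
    (g' := fun t => rateIntegrand μ a (ψ' (projIcc 0 T hT t)) (u t)) hT hg'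
    (aestronglyMeasurable_rateIntegrand hμ hQ (ψ.continuous.comp continuous_projIcc)
      (aemeasurable_pi_iff.2 fun i => (hu i).def'.aemeasurable))
    (fun t => rateIntegrand_nonneg (hpsd _) (u t)) (fun t => hle _ (u t))
  calc Jrate p d T hT μ a ψ x
      ≤ ENNReal.ofReal ((1/2) * ∫ t in (0:ℝ)..T, rateIntegrand μ a (ψ (projIcc 0 T hT t)) (u t)) :=
        sInf_le ⟨u, hu, hg, hux, rfl⟩
    _ ≤ ENNReal.ofReal (c * ((1/2) * ∫ t in (0:ℝ)..T,
          rateIntegrand μ a (ψ' (projIcc 0 T hT t)) (u t)) + η * (T / 2)) :=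
        ENNReal.ofReal_le_ofReal (by linarith)
    _ ≤ _ := by
        rw [← ENNReal.ofReal_mul hc.le]
        exact ENNReal.ofReal_add_le

theorem exists_Jrate_le_of_dist_lt {p d : ℕ} {T : ℝ} (hT : 0 ≤ T)
    {μ : (Fin p → ℝ) → Fin d → ℝ} {a : (Fin p → ℝ) → Matrix (Fin d) (Fin d) ℝ}
    (hμ : Continuous μ) (ha : Continuous a) (hpd : ∀ y, (a y).PosDef)
    (φ : C(Icc (0:ℝ) T, Fin p → ℝ)) {θ : ℝ} (hθ : 0 < θ) :
    ∃ δ > 0, ∀ ψ, dist ψ φ < δ → ∀ x, Jrate p d T hT μ a φ x ≤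
      ENNReal.ofReal ((1 + θ) ^ 2) * Jrate p d T hT μ a ψ x + ENNReal.ofReal (θ * (T / 2)) := by
  set K := Metric.cthickening 1 (range φ)
  have hφK : ∀ s, φ s ∈ K := fun s => Metric.self_subset_cthickening _ ⟨s, rfl⟩
  obtain ⟨δ, hδ, hest⟩ :=
    exists_rateIntegrand_le hμ ha hpd (isCompact_range φ.continuous).cthickening hθ
  refine ⟨min δ 1, lt_min hδ one_pos, fun ψ hψ x => ?_⟩
  have hclose : ∀ s, dist (ψ s) (φ s) < min δ 1 := fun s =>
    (ContinuousMap.dist_apply_le_dist s).trans_lt hψ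
  refine Jrate_le_mul_add hT hμ (ha.matrix_inv_of_det_ne_zero fun y => (hpd y).det_pos.ne')
    (fun y => (hpd y).inv.posSemidef) (by positivity) (fun s v => ?_) x
  refine hest _ (hφK s) _ ?_ ((dist_comm _ _).trans_lt ((hclose s).trans_le (min_le_left _ _))) v
  exact Metric.mem_cthickening_of_dist_le _ _ _ _ ⟨s, rfl⟩ ((hclose s).le.trans (min_le_right _ _))

theorem stmt16 (p d : ℕ) (T : ℝ) (hT : 0 < T)
    (μ : (Fin p → ℝ) → (Fin d → ℝ)) (hμ : Continuous μ)
    (a : (Fin p → ℝ) → Matrix (Fin d) (Fin d) ℝ)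
    (ha : Continuous a) (hpd : ∀ y, (a y).PosDef)
    -- for each fixed φ, J(·|φ) is lower semicontinuous
    (hlsc : ∀ φ : C(Set.Icc (0:ℝ) T, Fin p → ℝ),
      LowerSemicontinuous (Jrate p d T hT.le μ a φ))
    (φn : ℕ → C(Set.Icc (0:ℝ) T, Fin p → ℝ)) (φ : C(Set.Icc (0:ℝ) T, Fin p → ℝ))
    (xn : ℕ → C(Set.Icc (0:ℝ) T, Fin d → ℝ)) (x : C(Set.Icc (0:ℝ) T, Fin d → ℝ))
    (hφ : Tendsto φn atTop (nhds φ)) (hx : Tendsto xn atTop (nhds x)) :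
    Jrate p d T hT.le μ a φ x ≤
      liminf (fun n => Jrate p d T hT.le μ a (φn n) (xn n)) atTop := by
  refine ENNReal.le_of_forall_pos_le_sq_mul_add (C := T / 2) fun θ hθ => ?_
  obtain ⟨δ, hδ, hJ⟩ := exists_Jrate_le_of_dist_lt hT.le hμ ha hpd φ hθ
  calc Jrate p d T hT.le μ a φ x
      ≤ liminf (fun n => Jrate p d T hT.le μ a φ (xn n)) atTop :=
        ((hlsc φ).le_liminf x).trans hx.liminf_le_liminf_comp
    _ ≤ liminf (fun n => ENNReal.ofReal ((1 + θ) ^ 2) * Jrate p d T hT.le μ a (φn n) (xn n)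
          + ENNReal.ofReal (θ * (T / 2))) atTop :=
        liminf_le_liminf ((Metric.tendsto_nhds.1 hφ δ hδ).mono fun n hn => hJ _ hn _)
    _ = ENNReal.ofReal ((1 + θ) ^ 2) * liminf (fun n => Jrate p d T hT.le μ a (φn n) (xn n)) atTop
          + ENNReal.ofReal (θ * (T / 2)) := by
        rw [liminf_add_const _ _ _ (by isBoundedDefault) (by isBoundedDefault),
          ENNReal.liminf_const_mul_of_ne_top ENNReal.ofReal_ne_top]
end

section
/- Fix z ∈ ℝ^d, a continuous map t ↦ A(t) ∈ ℝ^{d×d} with A(t) symmetric positive definite, and b ∈ L²([0,T], ℝ^d). Then the infimum over u ∈ L²([0,T],ℝ^d) with ∫₀ᵀ u(t) dt = z of (1/2)∫₀ᵀ (u(t) − b(t))ᵀ A(t)^{-1} (u(t) − b(t)) dt equals (1/2)(z − B)ᵀ Ā^{-1} (z − B), where B = ∫₀ᵀ b(t) dt and Ā = ∫₀ᵀ A(t) dt. The minimizer is u(t) = b(t) − A(t)λ with λ = −Ā^{-1}(z − B). -/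
/-!
For a positive definite `M`, completing the square gives the pointwise Fenchel–Young bound
`2 ⟪w, v⟫ - ⟪w, M w⟫ ≤ ⟪v, M⁻¹ v⟫`, with equality at `v = M w`. Integrating it with `v = u - b`
and the Lagrange multiplier `w = Ā⁻¹ (z - B)` bounds the cost of every admissible `u` below by
`(z - B)ᵀ Ā⁻¹ (z - B)`, and `u₀ = b + A w` is exactly the control for which equality holds at
every time.
-/

open MeasureTheory Matrix

namespace Matrix

variable {n : Type*} [Fintype n] [DecidableEq n]

lemma PosDef.two_mul_dotProduct_sub_le {M : Matrix n n ℝ} (hM : M.PosDef) (w v : n → ℝ) :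
    2 * (w ⬝ᵥ v) - w ⬝ᵥ M *ᵥ w ≤ v ⬝ᵥ M⁻¹ *ᵥ v := by
  have hunit : IsUnit M.det := hM.det_pos.ne'.isUnit
  have hsymm : Mᵀ = M := by
    simpa [conjTranspose_eq_transpose_of_trivial] using hM.isHermitian.eq
  have hMinv : M⁻¹ *ᵥ M *ᵥ w = w := by
    rw [mulVec_mulVec, nonsing_inv_mul M hunit, one_mulVec]
  have hcross : M *ᵥ w ⬝ᵥ M⁻¹ *ᵥ v = w ⬝ᵥ v := by
    rw [← vecMul_transpose, hsymm, ← dotProduct_mulVec, mulVec_mulVec, mul_nonsing_inv M hunit,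
      one_mulVec]
  -- positivity of `M⁻¹` at `v - M w`, expanded
  have h := hM.inv.posSemidef.dotProduct_mulVec_nonneg (v - M *ᵥ w)
  simp only [star_trivial, mulVec_sub, hMinv, sub_dotProduct, dotProduct_sub, hcross] at h
  rw [dotProduct_comm v w, dotProduct_comm (M *ᵥ w) w] at h
  linarith

end Matrix

section IntervalIntegral

variable {m n : Type*} [Fintype n] {a b : ℝ}

lemma IntervalIntegrable.dotProduct {f : ℝ → n → ℝ}
    (hf : ∀ i, IntervalIntegrable (fun t => f t i) volume a b) (c : n → ℝ) :
    IntervalIntegrable (fun t => c ⬝ᵥ f t) volume a b := by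
  have h := IntervalIntegrable.sum Finset.univ fun i _ => (hf i).const_mul (c i)
  simp only [Finset.sum_fn] at h
  exact h

lemma intervalIntegral.integral_dotProduct {f : ℝ → n → ℝ}
    (hf : ∀ i, IntervalIntegrable (fun t => f t i) volume a b) (c : n → ℝ) :
    ∫ t in a..b, c ⬝ᵥ f t = c ⬝ᵥ fun i => ∫ t in a..b, f t i := by
  simp only [dotProduct]
  rw [intervalIntegral.integral_finsetSum fun i _ => (hf i).const_mul (c i)]
  simp only [intervalIntegral.integral_const_mul]

lemma IntervalIntegrable.mulVec {A : ℝ → Matrix m n ℝ}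
    (hA : ∀ i j, IntervalIntegrable (fun t => A t i j) volume a b) (c : n → ℝ) (i : m) :
    IntervalIntegrable (fun t => (A t *ᵥ c) i) volume a b := by
  simpa only [Matrix.mulVec, dotProduct_comm c] using IntervalIntegrable.dotProduct (hA i) c

lemma intervalIntegral.integral_mulVec {A : ℝ → Matrix m n ℝ}
    (hA : ∀ i j, IntervalIntegrable (fun t => A t i j) volume a b) (c : n → ℝ) (i : m) :
    ∫ t in a..b, (A t *ᵥ c) i = ((Matrix.of fun i j => ∫ t in a..b, A t i j) *ᵥ c) i := by
  simp only [mulVec, dotProduct_comm _ c]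
  exact integral_dotProduct (hA i) c

lemma intervalIntegral.integral_dotProduct_mulVec [Fintype m] {A : ℝ → Matrix m n ℝ}
    (hA : ∀ i j, IntervalIntegrable (fun t => A t i j) volume a b) (x : m → ℝ) (y : n → ℝ) :
    ∫ t in a..b, x ⬝ᵥ A t *ᵥ y = x ⬝ᵥ (Matrix.of fun i j => ∫ t in a..b, A t i j) *ᵥ y := by
  rw [integral_dotProduct (IntervalIntegrable.mulVec hA y)]
  simp only [integral_mulVec hA]

lemma Matrix.posDef_intervalIntegral [DecidableEq n] {A : ℝ → Matrix n n ℝ} (hab : a < b)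
    (hA : ∀ i j, IntervalIntegrable (fun t => A t i j) volume a b) (hpd : ∀ t, (A t).PosDef) :
    (Matrix.of fun i j => ∫ t in a..b, A t i j).PosDef := by
  have hsymm : ∀ t i j, A t j i = A t i j := fun t i j => by
    simpa using congrFun₂ (hpd t).isHermitian.eq i j
  refine .of_dotProduct_mulVec_pos ?_ fun x hx => ?_
  · ext i j
    simpa using intervalIntegral.integral_congr fun t _ => hsymm t i j
  · rw [star_trivial, ← intervalIntegral.integral_dotProduct_mulVec hA]
    refine intervalIntegral.intervalIntegral_pos_of_pos
      (IntervalIntegrable.dotProduct (IntervalIntegrable.mulVec hA x) x) (fun t => ?_) hab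
    simpa using (hpd t).dotProduct_mulVec_pos hx

lemma intervalIntegral.two_mul_dotProduct_sub_le_integral [DecidableEq n] {A : ℝ → Matrix n n ℝ}
    (hab : a ≤ b) (hA : ∀ i j, IntervalIntegrable (fun t => A t i j) volume a b)
    (hpd : ∀ t, (A t).PosDef) {v : ℝ → n → ℝ}
    (hv : ∀ i, IntervalIntegrable (fun t => v t i) volume a b)
    (hQ : IntervalIntegrable (fun t => v t ⬝ᵥ (A t)⁻¹ *ᵥ v t) volume a b) (w : n → ℝ) :
    2 * (w ⬝ᵥ fun i => ∫ t in a..b, v t i) - w ⬝ᵥ (Matrix.of fun i j => ∫ t in a..b, A t i j) *ᵥ w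
      ≤ ∫ t in a..b, v t ⬝ᵥ (A t)⁻¹ *ᵥ v t := by
  have hlin := IntervalIntegrable.dotProduct hv w
  have hquad := IntervalIntegrable.dotProduct (IntervalIntegrable.mulVec hA w) w
  rw [← integral_dotProduct hv, ← integral_dotProduct_mulVec hA, ← integral_const_mul,
    ← integral_sub (hlin.const_mul 2) hquad]
  exact integral_mono_on hab ((hlin.const_mul 2).sub hquad) hQ
    fun t _ => (hpd t).two_mul_dotProduct_sub_le w (v t)

end IntervalIntegral

theorem stmt18_general (d : ℕ) (T : ℝ) (hT : 0 < T)
    (A : ℝ → Matrix (Fin d) (Fin d) ℝ) (hA : Continuous A) (hpd : ∀ t, (A t).PosDef)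
    (b : ℝ → Fin d → ℝ)
    (hbi : ∀ i, IntervalIntegrable (fun t => b t i) volume 0 T)
    (z : Fin d → ℝ) :
    let Abar : Matrix (Fin d) (Fin d) ℝ := Matrix.of fun i j => ∫ t in (0:ℝ)..T, A t i j
    let B : Fin d → ℝ := fun i => ∫ t in (0:ℝ)..T, b t i
    let u₀ : ℝ → Fin d → ℝ := fun t => b t + (A t).mulVec (Abar⁻¹.mulVec (z - B))
    -- the minimizer u₀(t) = b(t) − A(t)λ with λ = −Ā⁻¹(z − B) satisfies the constraint
    (∀ i, ∫ t in (0:ℝ)..T, u₀ t i = z i) ∧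
    -- and attains the value (1/2)(z−B)ᵀĀ⁻¹(z−B)
    ((1/2) * ∫ t in (0:ℝ)..T,
        dotProduct (u₀ t - b t) (((A t)⁻¹).mulVec (u₀ t - b t)) =
      (1/2) * dotProduct (z - B) (Abar⁻¹.mulVec (z - B))) ∧
    -- and the infimum of the constrained problem equals that value
    sInf {r : ℝ | ∃ u : ℝ → Fin d → ℝ,
        (∀ i, IntervalIntegrable (fun t => u t i) volume 0 T) ∧
        IntervalIntegrable (fun t =>
          dotProduct (u t - b t) (((A t)⁻¹).mulVec (u t - b t))) volume 0 T ∧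
        (∀ i, ∫ t in (0:ℝ)..T, u t i = z i) ∧
        r = (1/2) * ∫ t in (0:ℝ)..T,
          dotProduct (u t - b t) (((A t)⁻¹).mulVec (u t - b t))}
      = (1/2) * dotProduct (z - B) (Abar⁻¹.mulVec (z - B)) := by
  intro Abar B u₀
  have hAi : ∀ i j, IntervalIntegrable (fun t => A t i j) volume 0 T := fun i j =>
    (hA.matrix_elem i j).intervalIntegrable 0 T
  set w := Abar⁻¹ *ᵥ (z - B)
  have hw : Abar *ᵥ w = z - B := by
    rw [mulVec_mulVec, mul_nonsing_inv _ (posDef_intervalIntegral hT hAi hpd).det_pos.ne'.isUnit,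
      one_mulVec]
  have hu₀i : ∀ i, IntervalIntegrable (fun t => u₀ t i) volume 0 T := fun i =>
    (hbi i).add (IntervalIntegrable.mulVec hAi w i)
  have hconstr : ∀ i, ∫ t in (0:ℝ)..T, u₀ t i = z i := fun i => by
    simp only [u₀, Pi.add_apply]
    rw [intervalIntegral.integral_add (hbi i) (IntervalIntegrable.mulVec hAi w i),
      intervalIntegral.integral_mulVec hAi, hw]
    simp [B]
  have hu₀ : ∀ t, u₀ t - b t = A t *ᵥ w := fun t => add_sub_cancel_left _ _
  have hcost : ∀ t, (u₀ t - b t) ⬝ᵥ (A t)⁻¹ *ᵥ (u₀ t - b t) = w ⬝ᵥ A t *ᵥ w := fun t => by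
    rw [hu₀, mulVec_mulVec w, nonsing_inv_mul _ (hpd t).det_pos.ne'.isUnit, one_mulVec,
      dotProduct_comm]
  have hval : ∫ t in (0:ℝ)..T, (u₀ t - b t) ⬝ᵥ (A t)⁻¹ *ᵥ (u₀ t - b t) = (z - B) ⬝ᵥ w := by
    rw [intervalIntegral.integral_congr fun t _ => hcost t,
      intervalIntegral.integral_dotProduct_mulVec hAi, hw, dotProduct_comm]
  refine ⟨hconstr, by rw [hval], IsLeast.csInf_eq ⟨⟨u₀, hu₀i, ?_, hconstr, by rw [hval]⟩, ?_⟩⟩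
  · simpa only [hcost] using IntervalIntegrable.dotProduct (IntervalIntegrable.mulVec hAi w) w
  · rintro r ⟨u, hui, hQ, hu, rfl⟩
    have hint : (fun i => ∫ t in (0:ℝ)..T, (u t - b t) i) = z - B := funext fun i => by
      simp only [Pi.sub_apply]
      rw [intervalIntegral.integral_sub (hui i) (hbi i), hu]
    have hle := intervalIntegral.two_mul_dotProduct_sub_le_integral hT.le hAi hpd
      (v := fun t => u t - b t) (fun i => (hui i).sub (hbi i)) hQ w
    rw [hint, hw, dotProduct_comm w] at hle
    linarith

theorem stmt18 (d : ℕ) (T : ℝ) (hT : 0 < T)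
    (A : ℝ → Matrix (Fin d) (Fin d) ℝ) (hA : Continuous A) (hpd : ∀ t, (A t).PosDef)
    (b : ℝ → Fin d → ℝ)
    (hbi : ∀ i, IntervalIntegrable (fun t => b t i) volume 0 T)
    (hb2 : IntervalIntegrable (fun t => ∑ i, (b t i) ^ 2) volume 0 T)
    (z : Fin d → ℝ) :
    let Abar : Matrix (Fin d) (Fin d) ℝ := Matrix.of fun i j => ∫ t in (0:ℝ)..T, A t i j
    let B : Fin d → ℝ := fun i => ∫ t in (0:ℝ)..T, b t i
    let u₀ : ℝ → Fin d → ℝ := fun t => b t + (A t).mulVec (Abar⁻¹.mulVec (z - B))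
    -- the minimizer u₀(t) = b(t) − A(t)λ with λ = −Ā⁻¹(z − B) satisfies the constraint
    (∀ i, ∫ t in (0:ℝ)..T, u₀ t i = z i) ∧
    -- and attains the value (1/2)(z−B)ᵀĀ⁻¹(z−B)
    ((1/2) * ∫ t in (0:ℝ)..T,
        dotProduct (u₀ t - b t) (((A t)⁻¹).mulVec (u₀ t - b t)) =
      (1/2) * dotProduct (z - B) (Abar⁻¹.mulVec (z - B))) ∧
    -- and the infimum of the constrained problem equals that value
    sInf {r : ℝ | ∃ u : ℝ → Fin d → ℝ,
        (∀ i, IntervalIntegrable (fun t => u t i) volume 0 T) ∧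
        IntervalIntegrable (fun t =>
          dotProduct (u t - b t) (((A t)⁻¹).mulVec (u t - b t))) volume 0 T ∧
        (∀ i, ∫ t in (0:ℝ)..T, u t i = z i) ∧
        r = (1/2) * ∫ t in (0:ℝ)..T,
          dotProduct (u t - b t) (((A t)⁻¹).mulVec (u t - b t))}
      = (1/2) * dotProduct (z - B) (Abar⁻¹.mulVec (z - B)) :=
  stmt18_general d T hT A hA hpd b hbi z
end
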